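/- For every k > 1 and m ≥ 2, the implication of G by D' is precise: for every ν ∈ [m(k−1)] and every tuple (i_1,…,i_{k−1}) ∈ [m(k−1)]^{k−1}, if the XOR ⊕_{r=1}^{k+1} y^{ν,r}_{i_1,…,i_{k−1}} is removed from its clause in G (yielding a stronger formula G'), then some total truth assignment satisfies every formula of D' but falsifies G'. Here D' consists of the weight-constraint sets W^j_m(x^j) for 1 ≤ j < k together with, for each ν ∈ [m(k−1)], the formula ⋁_{(i_1,…,i_{k−1})} (x^1_{i_1} ∧ ⋯ ∧ x^{k−1}_{i_{k−1}} ∧ y^{ν,1}_{i_1,…,i_{k−1}}) and, for each ν ∈ [m(k−1)] and 2 ≤ r ≤ k+1, the formula ⋁_{(i_1,…,i_{k−1})} (x^1_{i_1} ∧ ⋯ ∧ x^{k−1}_{i_{k−1}} ∧ ¬y^{ν,r}_{i_1,…,i_{k−1}}), and G = ⋀_{ν ∈ [m(k−1)]} ⋁_{(i_1,…,i_{k−1}) ∈ [m(k−1)]^{k−1}} ⊕_{r=1}^{k+1} y^{ν,r}_{i_1,…,i_{k−1}}. -/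
import Mathlib


namespace PaperKDNF

/-- A literal: a propositional variable together with a polarity
(`true` means the variable occurs unnegated). -/
abbrev Lit (V : Type) := V × Bool

/-- A term: a conjunction of literals, represented as a finite set of literals.
The empty term is the constant true. -/
abbrev Trm (V : Type) := Finset (Lit V)

/-- A DNF formula: a disjunction of terms, represented as a finite set of terms. -/
abbrev DNF (V : Type) := Finset (Trm V)

/-- A DNF set: a finite set of DNF formulas, interpreted as their conjunction. -/
abbrev DNFSet (V : Type) := Finset (DNF V)

/-- Evaluation of a literal under a truth assignment. -/
def litEval {V : Type} (α : V → Bool) (l : Lit V) : Bool :=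
  if l.2 then α l.1 else !(α l.1)

/-- A term is satisfied iff all its literals are true. -/
def trmSat {V : Type} (α : V → Bool) (t : Trm V) : Prop :=
  ∀ l ∈ t, litEval α l = true

/-- A DNF formula is satisfied iff some term in it is satisfied. -/
def dnfSat {V : Type} (α : V → Bool) (F : DNF V) : Prop :=
  ∃ t ∈ F, trmSat α t

/-- A DNF set is satisfied iff every formula in it is satisfied. -/
def setSat {V : Type} (α : V → Bool) (D : DNFSet V) : Prop :=
  ∀ F ∈ D, dnfSat α F

/-- A DNF set is satisfiable iff some truth assignment satisfies it. -/
def Satisfiable {V : Type} (D : DNFSet V) : Prop :=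
  ∃ α : V → Bool, setSat α D

/-- A `k`-DNF formula: all terms have at most `k` literals. -/
def IsKDNF {V : Type} (k : ℕ) (F : DNF V) : Prop :=
  ∀ t ∈ F, t.card ≤ k

/-- A `k`-DNF set: a finite set of `k`-DNF formulas. -/
def IsKDNFSet {V : Type} (k : ℕ) (D : DNFSet V) : Prop :=
  ∀ F ∈ D, IsKDNF k F

/-- The variables occurring in a term. -/
def trmVars {V : Type} [DecidableEq V] (t : Trm V) : Finset V :=
  t.image Prod.fst

/-- The variables occurring in a DNF formula. -/
def dnfVars {V : Type} [DecidableEq V] (F : DNF V) : Finset V :=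
  F.biUnion trmVars

/-- The variables occurring in a DNF set. -/
def setVars {V : Type} [DecidableEq V] (D : DNFSet V) : Finset V :=
  D.biUnion dnfVars

/-- The DNF set obtained from `D` by replacing the term `t` of the formula `F ∈ D`
by the term `t'`. -/
def weaken {V : Type} [DecidableEq V] (D : DNFSet V) (F : DNF V) (t t' : Trm V) :
    DNFSet V :=
  insert (insert t' (F.erase t)) (D.erase F)

/-- A DNF set is minimally unsatisfiable iff it is unsatisfiable and replacing any
single term `t` appearing in a formula `F` of the set by any proper subterm `t'` of
`t` (obtained by deleting at least one literal; the empty term is the constant true)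
yields a satisfiable set. -/
def MinUnsat {V : Type} [DecidableEq V] (D : DNFSet V) : Prop :=
  ¬ Satisfiable D ∧
    ∀ F ∈ D, ∀ t ∈ F, ∀ t' ⊂ t, Satisfiable (weaken D F t t')

/-- Indices of the `j`-th block `X_j = {x_{(j-1)(k-1)+1}, …, x_{j(k-1)}}` (1-based). -/
def blockX (k j : ℕ) : Finset ℕ := Finset.Ioc ((j-1)*(k-1)) (j*(k-1))

/-- The term `⋀_{i ∈ B} ¬x_i`. -/
def negBlockTerm {V : Type} [DecidableEq V] (xv : ℕ → V) (B : Finset ℕ) : Trm V :=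
  B.image (fun i => (xv i, false))

/-- The term `⋀_{i' ∈ B, i' ≠ i} ¬x_{i'}`. -/
def almostNegTerm {V : Type} [DecidableEq V] (xv : ℕ → V) (B : Finset ℕ) (i : ℕ) :
    Trm V :=
  (B.erase i).image (fun i' => (xv i', false))

/-- Formulas (i)–(ii) of `W_m`: `¬u_j ∨ (u_{j-1} ∧ ⋀_{x ∈ X_j} ¬x)` for
`1 ≤ j ≤ m-1` (for `j = 1` the conjunct `u_{j-1}` is absent). -/
def Wu {V : Type} [DecidableEq V] (k : ℕ) (xv uv : ℕ → V) (j : ℕ) : DNF V :=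
  { {(uv j, false)},
    (if j = 1 then (∅ : Trm V) else {(uv (j-1), true)}) ∪ negBlockTerm xv (blockX k j) }

/-- Formulas (iii)–(iv) of `W_m`:
`¬v_j ∨ u_j ∨ (v_{j-1} ∧ ⋀_{x ∈ X_j} ¬x) ∨ ⋁_{x ∈ X_j} (u_{j-1} ∧ ⋀_{x' ∈ X_j, x' ≠ x} ¬x')`
for `1 ≤ j ≤ m-1` (for `j = 1` the term containing `v_{j-1}` and the conjuncts
`u_{j-1}` are absent). -/
def Wv {V : Type} [DecidableEq V] (k : ℕ) (xv uv vv : ℕ → V) (j : ℕ) : DNF V :=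
  ({ {(vv j, false)}, {(uv j, true)} } : DNF V) ∪
  (if j = 1 then (∅ : DNF V)
    else {insert (vv (j-1), true) (negBlockTerm xv (blockX k j))}) ∪
  (blockX k j).image (fun i =>
    (if j = 1 then (∅ : Trm V) else {(uv (j-1), true)}) ∪ almostNegTerm xv (blockX k j) i)

/-- Formula (v) of `W_m`:
`(v_{m-1} ∧ ⋀_{x ∈ X_m} ¬x) ∨ ⋁_{x ∈ X_m} (u_{m-1} ∧ ⋀_{x' ∈ X_m, x' ≠ x} ¬x')`. -/
def Wlast {V : Type} [DecidableEq V] (m k : ℕ) (xv uv vv : ℕ → V) : DNF V :=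
  insert (insert (vv (m-1), true) (negBlockTerm xv (blockX k m)))
    ((blockX k m).image (fun i =>
      insert (uv (m-1), true) (almostNegTerm xv (blockX k m) i)))

/-- The `k`-DNF set `W_m`, over the `x`-variables `xv 1, …, xv (m(k-1))` and the
auxiliary variables `uv 1, …, uv (m-1)` and `vv 1, …, vv (m-1)`. -/
def Wset {V : Type} [DecidableEq V] (m k : ℕ) (xv uv vv : ℕ → V) : DNFSet V :=
  (Finset.Icc 1 (m-1)).image (Wu k xv uv) ∪
  (Finset.Icc 1 (m-1)).image (Wv k xv uv vv) ∪
  {Wlast m k xv uv vv}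

/-- A clause of an XOR-CNF formula: a disjunction of XORs and negated XORs, where
each disjunct is recorded as the block of variables it is the exclusive or of,
together with its polarity (`true` = unnegated XOR). -/
abbrev XClause (V : Type) := Finset (Finset V × Bool)

/-- The value of the exclusive or of the variables of `B`. -/
def xorVal {V : Type} (α : V → Bool) (B : Finset V) : Bool :=
  decide ((B.filter (fun v => α v = true)).card % 2 = 1)

/-- The value of a possibly negated XOR. -/
def xorLitVal {V : Type} (α : V → Bool) (p : Finset V × Bool) : Bool :=
  if p.2 then xorVal α p.1 else !(xorVal α p.1)

/-- Satisfaction of a single XOR-clause (the empty clause is the constant false). -/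
def xClauseSat {V : Type} (α : V → Bool) (C : XClause V) : Prop :=
  ∃ p ∈ C, xorLitVal α p = true

/-- Satisfaction of an XOR-CNF formula, given as its finite set of clauses. -/
def xCnfSat {V : Type} (α : V → Bool) (Cs : Finset (XClause V)) : Prop :=
  ∀ C ∈ Cs, xClauseSat α C

/-- `(blocks, Cs)` is a `[w]`-XOR-CNF formula: its variables are partitioned into
disjoint blocks of exactly `w` variables each, and every XOR or negated XOR
occurring in a clause is the exclusive or of exactly the variables of one full
block. -/
def IsXorCNF {V : Type} (w : ℕ) (blocks : Finset (Finset V))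
    (Cs : Finset (XClause V)) : Prop :=
  (∀ B ∈ blocks, B.card = w) ∧
  (∀ B ∈ blocks, ∀ B' ∈ blocks, B ≠ B' → Disjoint B B') ∧
  (∀ C ∈ Cs, ∀ p ∈ C, p.1 ∈ blocks)

/-- The variables occurring in an XOR-CNF formula. -/
def xorVars {V : Type} [DecidableEq V] (Cs : Finset (XClause V)) : Finset V :=
  Cs.biUnion (fun C => C.biUnion (fun p => p.1))

/-- The DNF set `D` implies the XOR-CNF formula with clauses `Cs`: every total
truth assignment satisfying every formula of `D` also satisfies every clause of
`Cs`. -/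
def ImpliesXor {V : Type} (D : DNFSet V) (Cs : Finset (XClause V)) : Prop :=
  ∀ α : V → Bool, setSat α D → xCnfSat α Cs

/-- Delete the occurrence `p` of an XOR (or negated XOR) from the clause `C` of
`Cs`; a clause that loses all its disjuncts becomes the constant false. -/
def removeXor {V : Type} [DecidableEq V] (Cs : Finset (XClause V)) (C : XClause V)
    (p : Finset V × Bool) : Finset (XClause V) :=
  insert (C.erase p) (Cs.erase C)

/-- The implication of the XOR-CNF formula `Cs` by the DNF set `D` is precise:
deleting any single XOR or negated XOR occurrence from a clause yields a formula
that `D` does not imply. -/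
def PreciseXor {V : Type} [DecidableEq V] (D : DNFSet V)
    (Cs : Finset (XClause V)) : Prop :=
  ∀ C ∈ Cs, ∀ p ∈ C, ¬ ImpliesXor D (removeXor Cs C p)

/-- The variables of the set `D'` (and of the formula `G`). -/
inductive DVar2 (k : ℕ) where
  | x : ℕ → ℕ → DVar2 k                     -- `x^j_i`
  | xu : ℕ → ℕ → DVar2 k                    -- auxiliary `u`-variable of `W^j_m`
  | xv : ℕ → ℕ → DVar2 k                    -- auxiliary `v`-variable of `W^j_m`
  | y : ℕ → ℕ → (Fin (k-1) → ℕ) → DVar2 k   -- `y^{ν,r}_{i_1,…,i_{k-1}}`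
deriving DecidableEq

/-- All tuples `(i_1, …, i_{k-1}) ∈ [m(k-1)]^{k-1}`. -/
def tuples (m k : ℕ) : Finset (Fin (k-1) → ℕ) :=
  Fintype.piFinset (fun _ => Finset.Icc 1 (m*(k-1)))

/-- The term `x^1_{i_1} ∧ ⋯ ∧ x^{k-1}_{i_{k-1}}`. -/
def xTerm2 (k : ℕ) (t : Fin (k-1) → ℕ) : Trm (DVar2 k) :=
  (Finset.univ : Finset (Fin (k-1))).image (fun j => (DVar2.x (j.1+1) (t j), true))

/-- The formula
`⋁_{(i_1,…,i_{k-1}) ∈ [m(k-1)]^{k-1}} (x^1_{i_1} ∧ ⋯ ∧ x^{k-1}_{i_{k-1}} ∧ y^{ν,1}_{i_1,…,i_{k-1}})`. -/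
def D'pos (m k ν : ℕ) : DNF (DVar2 k) :=
  (tuples m k).image (fun t => insert (DVar2.y ν 1 t, true) (xTerm2 k t))

/-- The formula
`⋁_{(i_1,…,i_{k-1}) ∈ [m(k-1)]^{k-1}} (x^1_{i_1} ∧ ⋯ ∧ x^{k-1}_{i_{k-1}} ∧ ¬y^{ν,r}_{i_1,…,i_{k-1}})`. -/
def D'neg (m k ν r : ℕ) : DNF (DVar2 k) :=
  (tuples m k).image (fun t => insert (DVar2.y ν r t, false) (xTerm2 k t))

/-- The `k`-DNF set `D'`: the `k-1` disjoint copies `W^j_m(x^j)` of the weight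
constraint set, the formulas `D'pos m k ν` for `ν ∈ [m(k-1)]`, and the formulas
`D'neg m k ν r` for `ν ∈ [m(k-1)]` and `2 ≤ r ≤ k+1`. -/
def D'set (m k : ℕ) : DNFSet (DVar2 k) :=
  (Finset.Icc 1 (k-1)).biUnion
      (fun j => Wset m k (DVar2.x j) (DVar2.xu j) (DVar2.xv j)) ∪
  (Finset.Icc 1 (m*(k-1))).image (D'pos m k) ∪
  (Finset.Icc 1 (m*(k-1))).biUnion
      (fun ν => (Finset.Icc 2 (k+1)).image (D'neg m k ν))

/-- The block `{y^{ν,1}_{i_1,…,i_{k-1}}, …, y^{ν,k+1}_{i_1,…,i_{k-1}}}`. -/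
def yBlock (k ν : ℕ) (t : Fin (k-1) → ℕ) : Finset (DVar2 k) :=
  (Finset.Icc 1 (k+1)).image (fun r => DVar2.y ν r t)

/-- The blocks of the `[k+1]`-XOR-CNF formula `G`. -/
def Gblocks (m k : ℕ) : Finset (Finset (DVar2 k)) :=
  (Finset.Icc 1 (m*(k-1))).biUnion (fun ν => (tuples m k).image (yBlock k ν))

/-- The `ν`-th clause of `G`:
`⋁_{(i_1,…,i_{k-1}) ∈ [m(k-1)]^{k-1}} ⊕_{r=1}^{k+1} y^{ν,r}_{i_1,…,i_{k-1}}`. -/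
def Gclause (m k ν : ℕ) : XClause (DVar2 k) :=
  (tuples m k).image (fun t => (yBlock k ν t, true))

/-- The clauses of the `[k+1]`-XOR-CNF formula `G`. -/
def Gclauses (m k : ℕ) : Finset (XClause (DVar2 k)) :=
  (Finset.Icc 1 (m*(k-1))).image (Gclause m k)

/-- If exactly one `x`-variable is true (at position `p`), the `u`-variables encode
"all blocks up to `j` are zero" and all `v`-variables are true, then `W_m` is satisfied. -/
lemma Wset_sat {V : Type} [DecidableEq V] (m k : ℕ) (hk : 1 < k) (hm : 2 ≤ m)
    (xv uv vv : ℕ → V) (α : V → Bool) (p : ℕ) (hp1 : 1 ≤ p) (hp2 : p ≤ m*(k-1))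
    (hx : ∀ i, α (xv i) = decide (i = p))
    (hu : ∀ j, α (uv j) = decide (j*(k-1) < p))
    (hv : ∀ j, α (vv j) = true) :
    setSat α (Wset m k xv uv vv) := by
  have hmono : ∀ j : ℕ, (j-1)*(k-1) ≤ j*(k-1) :=
    fun j => Nat.mul_le_mul_right _ (Nat.sub_le j 1)
  intro F hF
  simp only [Wset, Finset.mem_union, Finset.mem_image, Finset.mem_singleton,
    Finset.mem_Icc] at hF
  rcases hF with (⟨j, hj, rfl⟩ | ⟨j, hj, rfl⟩) | rfl
  · -- case Wu
    by_cases hc : j*(k-1) < p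
    · refine ⟨_, Finset.mem_insert_of_mem (Finset.mem_singleton_self _), ?_⟩
      intro l hl
      rcases Finset.mem_union.mp hl with h | h
      · rcases eq_or_ne j 1 with rfl | hj1
        · simp at h
        · rw [if_neg hj1, Finset.mem_singleton] at h
          subst h
          simp only [litEval, if_pos, hu, decide_eq_true_eq]
          exact lt_of_le_of_lt (hmono j) hc
      · obtain ⟨i, hi, rfl⟩ := Finset.mem_image.mp h
        rw [blockX, Finset.mem_Ioc] at hi
        simp only [litEval, if_neg (by simp : ¬ (false = true)), hx,
          Bool.not_eq_true', decide_eq_false_iff_not]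
        exact Nat.ne_of_lt (lt_of_le_of_lt hi.2 hc)
    · refine ⟨_, Finset.mem_insert_self _ _, ?_⟩
      intro l hl
      rw [Finset.mem_singleton] at hl
      subst hl
      simp [litEval, hu, hc]
  · -- case Wv
    by_cases hc : j*(k-1) < p
    · refine ⟨{(uv j, true)}, ?_, ?_⟩
      · simp [Wv]
      · intro l hl
        rw [Finset.mem_singleton] at hl
        subst hl
        simp [litEval, hu, hc]
    · by_cases hc2 : (j-1)*(k-1) < p
      · -- p is in block j
        refine ⟨(if j = 1 then (∅ : Trm V) else {(uv (j-1), true)}) ∪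
          almostNegTerm xv (blockX k j) p, ?_, ?_⟩
        · refine Finset.mem_union_right _ (Finset.mem_image.mpr ⟨p, ?_, rfl⟩)
          rw [blockX, Finset.mem_Ioc]
          exact ⟨hc2, Nat.le_of_not_lt hc⟩
        · intro l hl
          rcases Finset.mem_union.mp hl with h | h
          · rcases eq_or_ne j 1 with rfl | hj1
            · simp at h
            · rw [if_neg hj1, Finset.mem_singleton] at h
              subst h
              simp only [litEval, if_pos, hu, decide_eq_true_eq]
              exact hc2
          · obtain ⟨i, hi, rfl⟩ := Finset.mem_image.mp h
            have hine : i ≠ p := Finset.ne_of_mem_erase hi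
            simp only [litEval, if_neg (by simp : ¬ (false = true)), hx,
              Bool.not_eq_true', decide_eq_false_iff_not]
            exact hine
      · -- p is strictly before block j; then j ≥ 2
        have hj1 : j ≠ 1 := by
          rintro rfl
          simp at hc2
          omega
        refine ⟨insert (vv (j-1), true) (negBlockTerm xv (blockX k j)), ?_, ?_⟩
        · refine Finset.mem_union_left _ (Finset.mem_union_right _ ?_)
          rw [if_neg hj1]
          exact Finset.mem_singleton_self _
        · intro l hl
          rcases Finset.mem_insert.mp hl with h | h
          · subst h
            simp [litEval, hv]
          · obtain ⟨i, hi, rfl⟩ := Finset.mem_image.mp h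
            rw [blockX, Finset.mem_Ioc] at hi
            simp only [litEval, if_neg (by simp : ¬ (false = true)), hx,
              Bool.not_eq_true', decide_eq_false_iff_not]
            have : p ≤ (j-1)*(k-1) := Nat.le_of_not_lt hc2
            omega
  · -- case Wlast
    by_cases hc : (m-1)*(k-1) < p
    · refine ⟨insert (uv (m-1), true) (almostNegTerm xv (blockX k m) p), ?_, ?_⟩
      · refine Finset.mem_insert_of_mem (Finset.mem_image.mpr ⟨p, ?_, rfl⟩)
        rw [blockX, Finset.mem_Ioc]
        exact ⟨hc, hp2⟩
      · intro l hl
        rcases Finset.mem_insert.mp hl with h | h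
        · subst h
          simp only [litEval, if_pos, hu, decide_eq_true_eq]
          exact hc
        · obtain ⟨i, hi, rfl⟩ := Finset.mem_image.mp h
          have hine : i ≠ p := Finset.ne_of_mem_erase hi
          simp only [litEval, if_neg (by simp : ¬ (false = true)), hx,
            Bool.not_eq_true', decide_eq_false_iff_not]
          exact hine
    · refine ⟨_, Finset.mem_insert_self _ _, ?_⟩
      intro l hl
      rcases Finset.mem_insert.mp hl with h | h
      · subst h
        simp [litEval, hv]
      · obtain ⟨i, hi, rfl⟩ := Finset.mem_image.mp h
        rw [blockX, Finset.mem_Ioc] at hi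
        simp only [litEval, if_neg (by simp : ¬ (false = true)), hx,
          Bool.not_eq_true', decide_eq_false_iff_not]
        have : p ≤ (m-1)*(k-1) := Nat.le_of_not_lt hc
        omega

/-- For every `k > 1` and `m ≥ 2`, the implication of `G` by `D'`
is precise: for every `ν ∈ [m(k-1)]` and every tuple
`(i_1,…,i_{k-1}) ∈ [m(k-1)]^{k-1}`, if the XOR `⊕_{r=1}^{k+1} y^{ν,r}_{i_1,…,i_{k-1}}`
is removed from its clause in `G` (yielding a stronger formula `G'`), then some
total truth assignment satisfies every formula of `D'` but falsifies `G'`. -/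
theorem D'set_implication_precise (m k : ℕ) (hk : 1 < k) (hm : 2 ≤ m) :
    ∀ ν ∈ Finset.Icc 1 (m*(k-1)), ∀ t ∈ tuples m k,
      ∃ α : DVar2 k → Bool,
        setSat α (D'set m k) ∧
        ¬ xCnfSat α (removeXor (Gclauses m k) (Gclause m k ν) (yBlock k ν t, true)) := by
  classical
  intro ν hν t ht
  have htmem : ∀ j : Fin (k-1), t j ∈ Finset.Icc 1 (m*(k-1)) := by
    intro j
    exact (Fintype.mem_piFinset.mp ht) j
  set tv : ℕ → ℕ := fun j => if h : j - 1 < k - 1 then t ⟨j-1, h⟩ else 0 with htv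
  set α : DVar2 k → Bool := fun v =>
    match v with
    | .x j i => decide (i = tv j)
    | .xu j j' => decide (j' * (k-1) < tv j)
    | .xv _ _ => true
    | .y _ r t' => decide (r = 1 ∧ t' = t) with hα
  have hxt : ∀ (j : Fin (k-1)), tv (j.1+1) = t j := by
    intro j
    rw [htv]
    simp only [Nat.add_sub_cancel]
    rw [dif_pos (show (j:ℕ) < k-1 from j.2)]
  have hxTerm : trmSat α (xTerm2 k t) := by
    intro l hl
    obtain ⟨j, _, rfl⟩ := Finset.mem_image.mp hl
    simp only [litEval, if_pos, hα]
    rw [hxt j]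
    simp
  refine ⟨α, ?_, ?_⟩
  · -- satisfies D'
    intro F hF
    simp only [D'set, Finset.mem_union, Finset.mem_biUnion, Finset.mem_image,
      Finset.mem_Icc] at hF
    rcases hF with (⟨j, hj, hFW⟩ | ⟨ν', hν', rfl⟩) | ⟨ν', hν', r, hr, rfl⟩
    · -- the W-sets
      have hjk : j - 1 < k - 1 := by omega
      have hp : tv j = t ⟨j-1, hjk⟩ := by rw [htv]; simp [dif_pos hjk]
      have hpmem := htmem ⟨j-1, hjk⟩
      rw [Finset.mem_Icc] at hpmem
      refine Wset_sat m k hk hm _ _ _ α (tv j) ?_ ?_ ?_ ?_ ?_ F hFW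
      · rw [hp]; exact hpmem.1
      · rw [hp]; exact hpmem.2
      · intro i; rfl
      · intro j'; rfl
      · intro j'; rfl
    · -- D'pos
      refine ⟨_, Finset.mem_image.mpr ⟨t, ht, rfl⟩, ?_⟩
      intro l hl
      rcases Finset.mem_insert.mp hl with h | h
      · subst h
        simp [litEval, hα]
      · exact hxTerm l h
    · -- D'neg
      refine ⟨_, Finset.mem_image.mpr ⟨t, ht, rfl⟩, ?_⟩
      intro l hl
      rcases Finset.mem_insert.mp hl with h | h
      · subst h
        simp only [litEval, if_neg (by simp : ¬ (false = true)), hα,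
          Bool.not_eq_true', decide_eq_false_iff_not]
        rintro ⟨rfl, -⟩
        omega
      · exact hxTerm l h
  · -- falsifies G'
    intro hsat
    have hC : (Gclause m k ν).erase (yBlock k ν t, true) ∈
        removeXor (Gclauses m k) (Gclause m k ν) (yBlock k ν t, true) :=
      Finset.mem_insert_self _ _
    obtain ⟨q, hq, hqval⟩ := hsat _ hC
    obtain ⟨hqne, hqC⟩ := Finset.mem_erase.mp hq
    obtain ⟨t', ht', rfl⟩ := Finset.mem_image.mp hqC
    have htne : t' ≠ t := by
      rintro rfl
      exact hqne rfl
    have hempty : (yBlock k ν t').filter (fun v => α v = true) = ∅ := by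
      apply Finset.filter_false_of_mem
      intro v hv
      obtain ⟨r, _, rfl⟩ := Finset.mem_image.mp hv
      simp only [hα, decide_eq_true_eq]
      rintro ⟨-, rfl⟩
      exact htne rfl
    rw [xorLitVal, if_pos rfl, xorVal, hempty] at hqval
    simp at hqval

end PaperKDNF
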